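/- Let k be a field of characteristic zero, F ⊆ k a subfield, and A a reduced commutative k-algebra that is essentially of finite type over k. Let B be the integral closure of A in its total ring of fractions (the normalization of A), and assume the map A → B is formally unramified (equivalently Ω¹_{B/A} = 0). Let I ⊆ A be a conducting ideal for the normalization, i.e. an ideal of A whose extension to B is contained in the image of I (so I is simultaneously an ideal of A and of B). Then for every i ≥ 0 the natural map Ω^i_{(A,I)/F} → Ω^i_{(B,I)/F} induced by A → B is surjective. -/

import Mathlib

/-!
As `A → B` is formally unramified, `Ω¹_{B/F}` is spanned over `B` by the image of `Ω¹_{A/F}`, so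
`Ω^i_{B/F}` is spanned by wedges of such images. By the conormal sequence and a descent of
alternating maps, the kernel of `Ω^i_{B/F} → Ω^i_{(B/IB)/F}` lies in the span of `IB·Ω^i_{B/F}`
and `d(IB) ∧ Ω^{i-1}_{B/F}`. As `I` is conducting, `IB` is the image of `I`, so `ca ∈ I` for
`a ∈ I`, `c ∈ B`. Writing `φ` for the map induced by `A → B`, both kinds of generators lift:
`c·a·φ(η) = φ(ca·η)` and `c·da ∧ φ(η) = φ(d(ca) ∧ η) - a·dc ∧ φ(η)`.
-/

open ExteriorAlgebra

section
variable (F A B : Type*) [CommRing F] [CommRing A] [CommRing B]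
  [Algebra F A] [Algebra F B] [Algebra A B] [IsScalarTower F A B]

/-- The natural algebra map on exterior algebras of Kähler differentials induced by `A → B`. -/
noncomputable def kaehlerExtMap :
    ExteriorAlgebra A (Ω[A⁄F]) →ₐ[A] ExteriorAlgebra B (Ω[B⁄F]) :=
  ExteriorAlgebra.lift A
    ⟨((ExteriorAlgebra.ι B).restrictScalars A).comp (KaehlerDifferential.map F F A B),
      fun _ => ExteriorAlgebra.ι_sq_zero _⟩

theorem kaehlerExtMap_mem (i : ℕ) (x : ExteriorAlgebra A (Ω[A⁄F]))
    (hx : x ∈ ⋀[A]^i (Ω[A⁄F])) :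
    kaehlerExtMap F A B x ∈ ⋀[B]^i (Ω[B⁄F]) := by
  rw [← ExteriorAlgebra.ιMulti_span_fixedDegree] at hx
  induction hx using Submodule.span_induction with
  | mem x h =>
      obtain ⟨v, rfl⟩ := h
      have : kaehlerExtMap F A B (ExteriorAlgebra.ιMulti A i v) =
          ExteriorAlgebra.ιMulti B i (fun j => KaehlerDifferential.map F F A B (v j)) := by
        rw [ExteriorAlgebra.ιMulti_apply, ExteriorAlgebra.ιMulti_apply, map_list_prod]
        simp only [List.map_ofFn]
        have hfun : (⇑(kaehlerExtMap F A B) ∘ fun j : Fin i => ExteriorAlgebra.ι A (v j)) =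
            fun j : Fin i => ExteriorAlgebra.ι B (KaehlerDifferential.map F F A B (v j)) := by
          funext j
          simp [kaehlerExtMap]
          first
            | exact ExteriorAlgebra.lift_ι_apply A _ _ (v j)
            | exact ExteriorAlgebra.lift_ι_apply _ _ (v j)
            | (rw [ExteriorAlgebra.lift_ι_apply]; try rfl)
        rw [hfun]
      rw [this]
      exact ExteriorAlgebra.ιMulti_range B i (Set.mem_range_self _)
  | zero => simp
  | add x y _ _ hx hy => rw [map_add]; exact Submodule.add_mem _ hx hy
  | smul a x _ hx =>
      rw [map_smul, ← IsScalarTower.algebraMap_smul B a (kaehlerExtMap F A B x)]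
      exact Submodule.smul_mem _ _ hx

/-- The natural map `Ω^i_{A/F} → Ω^i_{B/F}` on `i`-th exterior powers of Kähler differentials
induced by the `F`-algebra map `A → B`. -/
noncomputable def kaehlerPowMap (i : ℕ) :
    ⋀[A]^i (Ω[A⁄F]) →ₗ[A] ⋀[B]^i (Ω[B⁄F]) where
  toFun x := ⟨kaehlerExtMap F A B x.1, kaehlerExtMap_mem F A B i x.1 x.2⟩
  map_add' x y := Subtype.ext (by simp)
  map_smul' a x := Subtype.ext (by simp)

end

theorem Ideal.mem_map_iff_exists_of_mul_mem {A B : Type*} [CommRing A] [CommRing B]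
    {f : A →+* B} {I : Ideal A} (hI : ∀ b : B, ∀ a ∈ I, ∃ a' ∈ I, f a' = b * f a) {r : B} :
    r ∈ I.map f ↔ ∃ a ∈ I, f a = r := by
  refine ⟨fun hr => ?_, fun ⟨a, ha, hr⟩ => hr ▸ Ideal.mem_map_of_mem f ha⟩
  induction hr using Submodule.span_induction with
  | mem r hr => exact hr
  | zero => exact ⟨0, I.zero_mem, map_zero f⟩
  | add r s _ _ hr hs =>
      obtain ⟨a, ha, rfl⟩ := hr
      obtain ⟨b, hb, rfl⟩ := hs
      exact ⟨a + b, I.add_mem ha hb, map_add f a b⟩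
  | smul b r _ hr =>
      obtain ⟨a, ha, rfl⟩ := hr
      exact hI b a ha

section Multilinear

variable {R M N P ι : Type*} [CommRing R] [AddCommGroup M] [Module R M] [AddCommGroup N]
  [Module R N] [AddCommGroup P] [Module R P]

theorem MultilinearMap.map_eq_map_of_forall_map_eq [Fintype ι]
    (f : MultilinearMap R (fun _ : ι => M) P) (p : M →ₗ[R] N) (hf : ∀ v j, p (v j) = 0 → f v = 0)
    {v v' : ι → M} (h : ∀ j, p (v j) = p (v' j)) : f v = f v' := by
  classical
  have update_eq : ∀ w j a, p a = p (w j) → f (Function.update w j a) = f w := by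
    intro w j a ha
    have := f.map_update_sub w j a (w j)
    rw [Function.update_eq_self, hf _ j (by simp [ha])] at this
    exact sub_eq_zero.mp this.symm
  have piecewise_eq : ∀ s : Finset ι, f (s.piecewise v' v) = f v := by
    intro s
    induction s using Finset.induction_on with
    | empty => rw [Finset.piecewise_empty]
    | insert k s hk ih =>
        rw [Finset.piecewise_insert,
          update_eq _ _ _ (by rw [Finset.piecewise_eq_of_notMem _ _ _ hk, h]), ih]
  rw [← piecewise_eq Finset.univ, Finset.piecewise_univ]

theorem AlternatingMap.exists_comp_eq_of_surjective [Fintype ι] {C : Type*} [CommRing C]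
    [Algebra R C] [Module C N] [IsScalarTower R C N] [Module C P] [IsScalarTower R C P]
    (hC : Function.Surjective (algebraMap R C)) (p : M →ₗ[R] N) (hp : Function.Surjective p)
    (f : M [⋀^ι]→ₗ[R] P) (hf : ∀ v j, p (v j) = 0 → f v = 0) :
    ∃ g : N [⋀^ι]→ₗ[C] P, ∀ v, g (p ∘ v) = f v := by
  have hwd : ∀ {v v' : ι → M}, (∀ j, p (v j) = p (v' j)) → f v = f v' :=
    f.toMultilinearMap.map_eq_map_of_forall_map_eq p hf
  set q := Function.surjInv hp
  have hq : ∀ x, p (q x) = x := Function.surjInv_eq hp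
  have hupd : ∀ [DecidableEq ι] (u : ι → N) j m,
      f (q ∘ Function.update u j (p m)) = f (Function.update (q ∘ u) j m) := by
    intro _ u j m
    refine hwd fun k => ?_
    rw [Function.comp_update]
    rcases eq_or_ne k j with rfl | hk
    · simp [hq]
    · simp [Function.update_of_ne hk]
  refine ⟨{ toFun := fun u => f (q ∘ u)
            map_update_add' := fun u j x y => ?_
            map_update_smul' := fun u j c x => ?_
            map_eq_zero_of_eq' := fun u j k huk hjk => ?_ }, fun v => hwd fun j => hq _⟩
  · obtain ⟨x, rfl⟩ := hp x
    obtain ⟨y, rfl⟩ := hp y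
    rw [← map_add, hupd, hupd, hupd, f.map_update_add]
  · obtain ⟨r, rfl⟩ := hC c
    obtain ⟨x, rfl⟩ := hp x
    rw [algebraMap_smul, ← map_smul, hupd, hupd, f.map_update_smul, algebraMap_smul]
  · exact f.map_eq_zero_of_eq _ (by simp [huk]) hjk

theorem MultilinearMap.forall_smul_mem_of_span_eq_top
    (f : MultilinearMap R (fun _ : ι => M) P) {s : Set M} (hs : Submodule.span R s = ⊤)
    (G : AddSubmonoid P) (T : Finset ι) (v : ι → M)
    (hT : ∀ u : ι → M, (∀ k ∈ T, u k ∈ s) → (∀ k ∉ T, u k = v k) → ∀ c : R, c • f u ∈ G) :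
    ∀ c : R, c • f v ∈ G := by
  classical
  induction T using Finset.induction_on with
  | empty => exact hT v (by simp) fun _ _ => rfl
  | insert k T hk ih =>
      refine ih fun u hu huv => ?_
      have hspan : ∀ x ∈ Submodule.span R s, ∀ c : R, c • f (Function.update u k x) ∈ G := by
        intro x hx
        induction hx using Submodule.span_induction with
        | mem x hx =>
            refine hT _ (fun k' hk' => ?_) (fun k' hk' => ?_)
            · rcases eq_or_ne k' k with rfl | hne
              · simpa using hx
              · rw [Function.update_of_ne hne]
                exact hu k' ((Finset.mem_insert.mp hk').resolve_left hne)
            · rw [Function.update_of_ne (by rintro rfl; exact hk' (Finset.mem_insert_self _ T))]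
              exact huv k' fun h => hk' (Finset.mem_insert_of_mem h)
        | zero => simp
        | add x y _ _ hx hy => simpa [f.map_update_add] using fun c => G.add_mem (hx c) (hy c)
        | smul b x _ hx => simpa [f.map_update_smul, smul_smul] using fun c => hx (c * b)
      simpa using hspan (u k) (hs ▸ Submodule.mem_top)

end Multilinear

namespace KaehlerDifferential

variable (F B : Type*) [CommRing F] [CommRing B] [Algebra F B]

theorem ker_map_quotient_le (I : Ideal B) :
    LinearMap.ker (map F F B (B ⧸ I)) ≤ I • ⊤ ⊔ Submodule.span B (D F B '' I) := by
  -- `map` factors as `Ω[B⁄F] → (B ⧸ I) ⊗ Ω[B⁄F] → Ω[(B ⧸ I)⁄F]`; the first kernel is `I • ⊤`,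
  -- the second is spanned by `1 ⊗ D a`, `a ∈ I`, by the conormal sequence.
  intro ω hω
  have htensor : mapBaseChange F B (B ⧸ I) (1 ⊗ₜ ω) = 0 := by simpa using hω
  obtain ⟨z, hz⟩ := (exact_kerCotangentToTensor_mapBaseChange F B (B ⧸ I)
    Ideal.Quotient.mk_surjective _).mp htensor
  obtain ⟨⟨a, ha⟩, rfl⟩ := Ideal.toCotangent_surjective _ z
  have ha : a ∈ I := Ideal.Quotient.eq_zero_iff_mem.mp ha
  have hquot := congrArg (TensorProduct.quotTensorEquivQuotSMul (Ω[B⁄F]) I) hz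
  simp only [kerCotangentToTensor_toCotangent,
    TensorProduct.quotTensorEquivQuotSMul_mk_one_tmul] at hquot
  have hsub : ω - D F B a ∈ I • (⊤ : Submodule B (Ω[B⁄F])) :=
    (Submodule.Quotient.eq _).mp hquot.symm
  rw [← sub_add_cancel ω (D F B a)]
  exact Submodule.add_mem_sup hsub (Submodule.subset_span ⟨a, ha, rfl⟩)

theorem span_range_map_eq_top (A : Type*) [CommRing A] [Algebra F A] [Algebra A B]
    [IsScalarTower F A B] [Algebra.FormallyUnramified A B] :
    Submodule.span B (Set.range (map F F A B)) = ⊤ := by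
  rw [eq_top_iff]
  rintro ω -
  obtain ⟨x, rfl⟩ : ω ∈ LinearMap.range (mapBaseChange F A B) := by
    rw [range_mapBaseChange, LinearMap.mem_ker]
    exact Subsingleton.elim _ _
  induction x with
  | zero => simp
  | tmul b η =>
      rw [mapBaseChange_tmul]
      exact Submodule.smul_mem _ b (Submodule.subset_span (Set.mem_range_self η))
  | add x y hx hy => rw [map_add]; exact Submodule.add_mem _ hx hy

end KaehlerDifferential

theorem kaehlerPowMap_ιMulti (F A B : Type*) [CommRing F] [CommRing A] [CommRing B]
    [Algebra F A] [Algebra F B] [Algebra A B] [IsScalarTower F A B]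
    (i : ℕ) (v : Fin i → Ω[A⁄F]) :
    kaehlerPowMap F A B i (exteriorPower.ιMulti A i v) =
      exteriorPower.ιMulti B i (KaehlerDifferential.map F F A B ∘ v) := by
  ext
  simp only [kaehlerPowMap, exteriorPower.ιMulti_apply_coe, LinearMap.coe_mk, AddHom.coe_mk,
    ExteriorAlgebra.ιMulti_apply, map_list_prod, List.map_ofFn]
  congr 2
  ext j
  exact ExteriorAlgebra.lift_ι_apply A _ _ (v j)

section Quotient

open KaehlerDifferential

variable (F B : Type*) [CommRing F] [CommRing B] [Algebra F B]

/-- `I·Ω^i + dI ∧ Ω^{i-1}`; the wedges with some slot `d a`, `a ∈ I`, stand for `dI ∧ Ω^{i-1}`,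
which avoids the truncated `i - 1`. -/
noncomputable def relKaehlerPowSpan (I : Ideal B) (i : ℕ) : Submodule B (⋀[B]^i (Ω[B⁄F])) :=
  I • ⊤ ⊔ Submodule.span B {ω | ∃ a ∈ I, ∃ (v : Fin i → Ω[B⁄F]) (j : Fin i),
    exteriorPower.ιMulti B i (Function.update v j (D F B a)) = ω}

theorem mem_relKaehlerPowSpan_of_kaehlerPowMap_eq_zero (I : Ideal B) {i : ℕ}
    {y : ⋀[B]^i (Ω[B⁄F])} (hy : kaehlerPowMap F B (B ⧸ I) i y = 0) :
    y ∈ relKaehlerPowSpan F B I i := by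
  set J := relKaehlerPowSpan F B I i
  have htors : Module.IsTorsionBySet B (⋀[B]^i (Ω[B⁄F]) ⧸ J) I :=
    (Module.isTorsionBySet_quotient_iff J I).mpr fun _ _ ha =>
      Submodule.mem_sup_left (Submodule.smul_mem_smul ha Submodule.mem_top)
  let := htors.module
  have := htors.isScalarTower (S := B)
  set w := J.mkQ.compAlternatingMap (exteriorPower.ιMulti B i)
  have hw : ∀ v j, map F F B (B ⧸ I) (v j) = 0 → w v = 0 := by
    intro v j hvj
    set L := w.toMultilinearMap.toLinearMap v j
    have hL : I • ⊤ ⊔ Submodule.span B (D F B '' I) ≤ LinearMap.ker L := by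
      refine sup_le (Submodule.smul_le.mpr fun a ha ω _ => ?_) (Submodule.span_le.mpr ?_)
      · rw [LinearMap.mem_ker, map_smul]
        exact @htors _ ⟨a, ha⟩
      · rintro _ ⟨a, ha, rfl⟩
        exact (Submodule.Quotient.mk_eq_zero J).mpr
          (Submodule.mem_sup_right (Submodule.subset_span ⟨a, ha, v, j, rfl⟩))
    simpa [L] using hL (ker_map_quotient_le F B I hvj)
  -- `J.mkQ ∘ ιMulti` descends to `Ω[(B ⧸ I)⁄F]`, so `J.mkQ` factors through `kaehlerPowMap`.
  obtain ⟨g, hg⟩ := AlternatingMap.exists_comp_eq_of_surjective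
    (Ideal.Quotient.mk_surjective (I := I)) _
    (map_surjective_of_surjective F F B (B ⧸ I) Ideal.Quotient.mk_surjective) w hw
  have hcomp : (exteriorPower.alternatingMapLinearEquiv g).restrictScalars B ∘ₗ
      kaehlerPowMap F B (B ⧸ I) i = J.mkQ := by
    refine exteriorPower.linearMap_ext ?_
    ext v
    simp [kaehlerPowMap_ιMulti, hg, w]
  rw [← Submodule.Quotient.mk_eq_zero, ← J.mkQ_apply, ← hcomp, LinearMap.comp_apply, hy,
    map_zero]

end Quotient

section Conductor

open KaehlerDifferential

variable (F A B : Type*) [CommRing F] [CommRing A] [CommRing B] [Algebra F A] [Algebra F B]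
  [Algebra A B] [IsScalarTower F A B] [Algebra.FormallyUnramified A B] {I : Ideal A}

theorem smul_mem_map_ker_kaehlerPowMap
    (hI : ∀ (b : B), ∀ a ∈ I, ∃ a' ∈ I, algebraMap A B a' = b * algebraMap A B a)
    {i : ℕ} {r : B} (hr : r ∈ I.map (algebraMap A B)) (ω : ⋀[B]^i (Ω[B⁄F])) :
    r • ω ∈ (LinearMap.ker (kaehlerPowMap F A (A ⧸ I) i)).map (kaehlerPowMap F A B i) := by
  have hω : ω ∈ Submodule.span B (exteriorPower.ιMulti B i ''
      {u | Set.range u ⊆ Set.range (map F F A B)}) := by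
    rw [exteriorPower.ιMulti_span_of_span B i _ (span_range_map_eq_top F B A)]
    trivial
  induction hω using Submodule.span_induction generalizing r with
  | mem ω hω =>
      obtain ⟨u, hu, rfl⟩ := hω
      obtain ⟨η, rfl⟩ : ∃ η, map F F A B ∘ η = u :=
        ⟨fun k => (hu ⟨k, rfl⟩).choose, funext fun k => (hu ⟨k, rfl⟩).choose_spec⟩
      obtain ⟨a, ha, rfl⟩ := (Ideal.mem_map_iff_exists_of_mul_mem hI).mp hr
      refine ⟨a • exteriorPower.ιMulti A i η, ?_, ?_⟩
      · rw [SetLike.mem_coe, LinearMap.mem_ker, map_smul, ← algebraMap_smul (A ⧸ I),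
          Ideal.Quotient.algebraMap_eq, Ideal.Quotient.eq_zero_iff_mem.mpr ha, zero_smul]
      · rw [map_smul, kaehlerPowMap_ιMulti, algebraMap_smul]
  | zero => simp
  | add x y _ _ hx hy => rw [smul_add]; exact Submodule.add_mem _ (hx hr) (hy hr)
  | smul b x _ hx => rw [smul_smul]; exact hx (Ideal.mul_mem_right b _ hr)

theorem smul_ιMulti_update_D_mem_map_ker_kaehlerPowMap
    (hI : ∀ (b : B), ∀ a ∈ I, ∃ a' ∈ I, algebraMap A B a' = b * algebraMap A B a)
    {i : ℕ} {r : B} (hr : r ∈ I.map (algebraMap A B)) (v : Fin i → Ω[B⁄F]) (j : Fin i) (c : B) :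
    c • exteriorPower.ιMulti B i (Function.update v j (D F B r)) ∈
      (LinearMap.ker (kaehlerPowMap F A (A ⧸ I) i)).map (kaehlerPowMap F A B i) := by
  set G := (LinearMap.ker (kaehlerPowMap F A (A ⧸ I) i)).map (kaehlerPowMap F A B i)
  obtain ⟨a, ha, rfl⟩ := (Ideal.mem_map_iff_exists_of_mul_mem hI).mp hr
  refine (exteriorPower.ιMulti B i).toMultilinearMap.forall_smul_mem_of_span_eq_top
    (span_range_map_eq_top F B A) G.toAddSubmonoid (Finset.univ.erase j) _ (fun u hu huv c => ?_) c
  have huj : u j = map F F A B (D F A a) := by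
    rw [huv j (by simp), Function.update_self, map_D]
  obtain ⟨η, rfl⟩ : ∃ η, map F F A B ∘ η = u := by
    have hu' : ∀ k, u k ∈ Set.range (map F F A B) := fun k =>
      (eq_or_ne k j).elim (fun hk => hk ▸ ⟨_, huj.symm⟩) fun hk => hu k (by simp [hk])
    exact ⟨fun k => (hu' k).choose, funext fun k => (hu' k).choose_spec⟩
  obtain ⟨a', ha', hca⟩ := hI c a ha
  have hcD : c • map F F A B (D F A a) = map F F A B (D F A a') - algebraMap A B a • D F B c := by
    rw [map_D, map_D, hca, Derivation.leibniz]
    abel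
  have hsplit : c • exteriorPower.ιMulti B i (map F F A B ∘ η) =
      exteriorPower.ιMulti B i (map F F A B ∘ Function.update η j (D F A a')) -
        algebraMap A B a •
          exteriorPower.ιMulti B i (Function.update (map F F A B ∘ η) j (D F B c)) := by
    conv_lhs => rw [← Function.update_eq_self j (map F F A B ∘ η)]
    rw [← AlternatingMap.map_update_smul, huj, hcD, AlternatingMap.map_update_sub,
      AlternatingMap.map_update_smul, Function.comp_update]
  change c • exteriorPower.ιMulti B i _ ∈ G
  rw [hsplit]
  refine G.sub_mem ⟨exteriorPower.ιMulti A i (Function.update η j (D F A a')),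
    ?_, kaehlerPowMap_ιMulti F A B i _⟩
    (smul_mem_map_ker_kaehlerPowMap F A B hI (Ideal.mem_map_of_mem _ ha) _)
  rw [SetLike.mem_coe, LinearMap.mem_ker, kaehlerPowMap_ιMulti]
  refine AlternatingMap.map_coord_zero _ j ?_
  rw [Function.comp_apply, Function.update_self, map_D, Ideal.Quotient.algebraMap_eq,
    Ideal.Quotient.eq_zero_iff_mem.mpr ha', map_zero]

theorem relKaehlerPowSpan_map_le_map_ker
    (hI : ∀ (b : B), ∀ a ∈ I, ∃ a' ∈ I, algebraMap A B a' = b * algebraMap A B a) (i : ℕ) :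
    (relKaehlerPowSpan F B (I.map (algebraMap A B)) i).restrictScalars A ≤
      (LinearMap.ker (kaehlerPowMap F A (A ⧸ I) i)).map (kaehlerPowMap F A B i) := by
  intro ω hω
  obtain ⟨ω₁, hω₁, ω₂, hω₂, rfl⟩ := Submodule.mem_sup.mp hω
  clear hω
  refine Submodule.add_mem _ ?_ ?_
  · exact Submodule.smul_induction_on hω₁
      (fun r hr ω _ => smul_mem_map_ker_kaehlerPowMap F A B hI hr ω)
      fun _ _ => Submodule.add_mem _
  · suffices ∀ c : B, c • ω₂ ∈
        (LinearMap.ker (kaehlerPowMap F A (A ⧸ I) i)).map (kaehlerPowMap F A B i) by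
      simpa using this 1
    induction hω₂ using Submodule.span_induction with
    | mem ω hω =>
        obtain ⟨r, hr, v, j, rfl⟩ := hω
        exact smul_ιMulti_update_D_mem_map_ker_kaehlerPowMap F A B hI hr v j
    | zero => simp
    | add x y _ _ hx hy => exact fun c => by rw [smul_add]; exact Submodule.add_mem _ (hx c) (hy c)
    | smul b x _ hx => exact fun c => by rw [smul_smul]; exact hx _

end Conductor

theorem relative_kaehler_power_surjective_of_normalization_general
    (F A B : Type*) [Field F]
    [CommRing A] [Algebra F A]
    [CommRing B] [Algebra A B] [Algebra F B] [IsScalarTower F A B]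
    [Algebra.FormallyUnramified A B]
    (I : Ideal A)
    (hI : ∀ (b : B), ∀ a ∈ I, ∃ a' ∈ I, algebraMap A B a' = b * algebraMap A B a)
    (i : ℕ) (y : ⋀[B]^i (Ω[B⁄F]))
    (hy : kaehlerPowMap F B (B ⧸ I.map (algebraMap A B)) i y = 0) :
    ∃ x : ⋀[A]^i (Ω[A⁄F]),
      kaehlerPowMap F A (A ⧸ I) i x = 0 ∧ kaehlerPowMap F A B i x = y := by
  obtain ⟨x, hx, rfl⟩ := relKaehlerPowSpan_map_le_map_ker F A B hI i
    (mem_relKaehlerPowSpan_of_kaehlerPowMap_eq_zero F B _ hy)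
  exact ⟨x, hx, rfl⟩

/-- Let `k` be a field of characteristic zero, `F ⊆ k` a subfield, and `A` a
reduced commutative `k`-algebra essentially of finite type over `k`.  Let `B` be the
normalization of `A` (the integral closure of `A` in its total ring of fractions), and assume
that `A → B` is formally unramified.  Let `I ⊆ A` be a conducting ideal for the normalization,
i.e. the extension of `I` to `B` is contained in the image of `I`.  Then for every `i ≥ 0` the
natural map `Ω^i_{(A,I)/F} → Ω^i_{(B,IB)/F}` is surjective. -/
theorem relative_kaehler_power_surjective_of_normalization
    (F k A B : Type*) [Field F] [Field k] [CharZero k] [Algebra F k]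
    [CommRing A] [IsReduced A] [Algebra k A] [Algebra F A] [IsScalarTower F k A]
    [Algebra.EssFiniteType k A]
    [CommRing B] [Algebra A B] [Algebra F B] [IsScalarTower F A B]
    [Algebra B (FractionRing A)] [IsScalarTower A B (FractionRing A)]
    [IsIntegralClosure B A (FractionRing A)]
    [Algebra.FormallyUnramified A B]
    (I : Ideal A)
    (hI : ∀ (b : B), ∀ a ∈ I, ∃ a' ∈ I, algebraMap A B a' = b * algebraMap A B a)
    (i : ℕ) (y : ⋀[B]^i (Ω[B⁄F]))
    (hy : kaehlerPowMap F B (B ⧸ I.map (algebraMap A B)) i y = 0) :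
    ∃ x : ⋀[A]^i (Ω[A⁄F]),
      kaehlerPowMap F A (A ⧸ I) i x = 0 ∧ kaehlerPowMap F A B i x = y :=
  relative_kaehler_power_surjective_of_normalization_general F A B I hI i y hy
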